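/- Diffeomorphism between root sets: let N≥1 and t∈ℝ. For x ∈ A_N(t) let y^t(x) ∈ ℝ^N_< be the increasingly ordered roots of P_x − t. Then y^t(x) ∈ A_N(−t), and the map y^t : A_N(t) → A_N(−t) is a smooth diffeomorphism onto A_N(−t), with inverse y^{−t}. -/

import Mathlib

/-- The set `A_N(t)` of strictly increasing `x` such that `P_x − t` has `N` distinct
real roots, where `P_x(λ) = ∏_k (λ − x_k)`. -/
def ANt (N : ℕ) (t : ℝ) : Set (Fin N → ℝ) :=
  {x | StrictMono x ∧ ∃ y : Fin N → ℝ, StrictMono y ∧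
    ∀ z : ℝ, (∏ k, (z - x k)) - t = ∏ k, (z - y k)}

/-- The map `y^t` sending `x ∈ A_N(t)` to the increasingly ordered roots of `P_x − t`. -/
noncomputable def rootMap (N : ℕ) (t : ℝ) (x : Fin N → ℝ) : Fin N → ℝ := by
  classical
  exact
    if h : ∃ y : Fin N → ℝ, StrictMono y ∧
        ∀ z : ℝ, (∏ k, (z - x k)) - t = ∏ k, (z - y k)
    then h.choose else x

/-! If `y` is the root vector of `P_x − t`, then `P_y = P_x − t`, so `x` is the root vector of
`P_y + t`: this makes `y^{−t}` the inverse of `y^t`. Near a point of `A_N(t)`, `y^t` is the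
implicit function of the equations `P_x(y_k) = t`; their `y`-derivative is diagonal with entries
`P_x'(y_k) = P_y'(y_k)`, which do not vanish because the roots of `P_y` are simple, so the
implicit function theorem makes `y^t` smooth. -/

open Finset Topology

variable {N : ℕ} {t : ℝ} {x : Fin N → ℝ}

theorem StrictMono.eq_of_range_subset {α : Type*} [Preorder α] {f g : Fin N → α}
    (hf : StrictMono f) (hg : StrictMono g) (h : Set.range f ⊆ Set.range g) : f = g := by
  refine (hf.range_inj hg).1 (Set.Finite.eq_of_subset_of_card_le (Set.finite_range g) h ?_)
  rw [Nat.card_range_of_injective hf.injective, Nat.card_range_of_injective hg.injective]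

theorem rootMap_spec (hx : x ∈ ANt N t) :
    StrictMono (rootMap N t x) ∧
      ∀ z, (∏ k, (z - x k)) - t = ∏ k, (z - rootMap N t x k) := by
  rw [rootMap, dif_pos hx.2]
  exact hx.2.choose_spec

theorem rootMap_eq_of_forall_prod_eq {y : Fin N → ℝ} (hx : x ∈ ANt N t) (hy : StrictMono y)
    (h : ∀ k, ∏ j, (y k - x j) = t) : rootMap N t x = y := by
  obtain ⟨hmono, hroots⟩ := rootMap_spec hx
  refine (hy.eq_of_range_subset hmono ?_).symm
  rintro _ ⟨k, rfl⟩
  have : ∏ j, (y k - rootMap N t x j) = 0 := by rw [← hroots, h, sub_self]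
  obtain ⟨j, -, hj⟩ := prod_eq_zero_iff.1 this
  exact ⟨j, (sub_eq_zero.1 hj).symm⟩

theorem rootMap_mem (hx : x ∈ ANt N t) : rootMap N t x ∈ ANt N (-t) := by
  obtain ⟨hmono, hroots⟩ := rootMap_spec hx
  exact ⟨hmono, x, hx.1, fun z => by linarith [hroots z]⟩

theorem rootMap_neg_rootMap (hx : x ∈ ANt N t) : rootMap N (-t) (rootMap N t x) = x := by
  refine rootMap_eq_of_forall_prod_eq (rootMap_mem hx) hx.1 fun k => ?_
  have := (rootMap_spec hx).2 (x k)
  rw [prod_eq_zero (mem_univ k) (sub_self _)] at this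
  linarith

theorem isOpen_setOf_strictMono {ι α : Type*} [Preorder ι] [Finite ι] [TopologicalSpace α]
    [LinearOrder α] [OrderClosedTopology α] : IsOpen {f : ι → α | StrictMono f} := by
  simp only [StrictMono, Set.ofPred_forall]
  exact isOpen_iInter_of_finite fun a => isOpen_iInter_of_finite fun b =>
    isOpen_iInter_of_finite fun _ => isOpen_lt (continuous_apply a) (continuous_apply b)

theorem deriv_prod_sub_apply_ne_zero {𝕜 ι : Type*} [NontriviallyNormedField 𝕜] [Fintype ι]
    [DecidableEq ι] {y : ι → 𝕜} (hy : Function.Injective y) (k : ι) :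
    deriv (fun z => ∏ l, (z - y l)) (y k) ≠ 0 := by
  have hsplit :
      (fun z => ∏ l, (z - y l)) = fun z => (z - y k) * ∏ l ∈ univ.erase k, (z - y l) :=
    funext fun z => (mul_prod_erase _ (fun l => z - y l) (mem_univ k)).symm
  rw [hsplit, deriv_fun_mul (by fun_prop) (by fun_prop)]
  simp only [deriv_sub_const, deriv_id'', sub_self, one_mul, zero_mul, add_zero]
  exact prod_ne_zero_iff.2 fun l hl => sub_ne_zero.2 (hy.ne (ne_of_mem_erase hl).symm)

open ContinuousLinearMap in
theorem ContinuousLinearMap.isInvertible_pi_smul_proj {𝕜 ι : Type*}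
    [NontriviallyNormedField 𝕜] [Fintype ι] {d : ι → 𝕜} (hd : ∀ i, d i ≠ 0) :
    (pi fun i => d i • proj (R := 𝕜) (φ := fun _ : ι => 𝕜) i).IsInvertible := by
  refine .of_inverse (g := pi fun i => (d i)⁻¹ • proj i) ?_ ?_ <;>
  · ext v i
    simp [hd]

theorem hasFDerivAt_pi_prod_sub {𝕜 ι κ : Type*} [NontriviallyNormedField 𝕜] [Fintype ι]
    [Fintype κ] (x : κ → 𝕜) (y : ι → 𝕜) :
    HasFDerivAt (fun y : ι → 𝕜 => fun k => ∏ j, (y k - x j))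
      (ContinuousLinearMap.pi fun k =>
        deriv (fun z => ∏ j, (z - x j)) (y k) •
          ContinuousLinearMap.proj (R := 𝕜) (φ := fun _ : ι => 𝕜) k) y := by
  refine hasFDerivAt_pi'.2 fun k => ?_
  have hP : DifferentiableAt 𝕜 (fun z => ∏ j, (z - x j)) (y k) := by fun_prop
  exact hP.hasDerivAt.comp_hasFDerivAt y (hasFDerivAt_apply (𝕜 := 𝕜) k y)

open ContinuousLinearMap in
theorem contDiffWithinAt_rootMap (hx : x ∈ ANt N t) :
    ContDiffWithinAt ℝ ((⊤ : ℕ∞) : WithTop ℕ∞) (rootMap N t) (ANt N t) x := by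
  obtain ⟨hmono, hroots⟩ := rootMap_spec hx
  set y := rootMap N t x
  let F : (Fin N → ℝ) × (Fin N → ℝ) → Fin N → ℝ := fun p k => ∏ j, (p.2 k - p.1 j)
  have hF : ContDiffAt ℝ ((⊤ : ℕ∞) : WithTop ℕ∞) F (x, y) := by
    refine ContDiff.contDiffAt (contDiff_pi.2 fun k => contDiff_prod fun j _ => ?_)
    fun_prop
  have hFy : F (x, y) = fun _ => t := funext fun k => by
    have hzero : ∏ j, (y k - y j) = 0 := prod_eq_zero (mem_univ k) (sub_self _)
    exact sub_eq_zero.1 ((hroots (y k)).trans hzero)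
  have hPx : (fun z => ∏ j, (z - x j)) = fun z => (∏ j, (z - y j)) + t :=
    funext fun z => by linarith [hroots z]
  have hinv : (fderiv ℝ F (x, y) ∘L inr ℝ _ _).IsInvertible := by
    have hpartial := ((hF.differentiableAt (by simp)).hasFDerivAt.comp y
      (hasFDerivAt_prodMk_right x y)).unique (hasFDerivAt_pi_prod_sub x y)
    rw [hpartial]
    refine isInvertible_pi_smul_proj fun k => ?_
    rw [hPx, deriv_add_const]
    exact deriv_prod_sub_apply_ne_zero hmono.injective k
  set ψ := hF.implicitFunction (by simp) hinv
  have hψx : ψ x = y := hF.implicitFunction_apply_self (by simp) hinv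
  have hψmono : ∀ᶠ x' in 𝓝 x, StrictMono (ψ x') :=
    (hF.contDiffAt_implicitFunction (by simp) hinv).continuousAt.preimage_mem_nhds
      (isOpen_setOf_strictMono.mem_nhds (hψx ▸ hmono))
  refine (hF.contDiffAt_implicitFunction (by simp) hinv).contDiffWithinAt.congr_of_eventuallyEq
    ?_ hψx.symm
  have hψroots := hF.eventually_apply_implicitFunction (by simp) hinv
  filter_upwards [nhdsWithin_le_nhds (hψmono.and hψroots), self_mem_nhdsWithin]
    with x' ⟨hm, hr⟩ hx'
  exact rootMap_eq_of_forall_prod_eq hx' hm fun k => by simpa [hFy] using congrFun hr k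

theorem rootMap_rootMap_neg {y : Fin N → ℝ} (hy : y ∈ ANt N (-t)) :
    rootMap N t (rootMap N (-t) y) = y := by
  simpa using rootMap_neg_rootMap hy

theorem rootMap_diffeo_general (N : ℕ) (t : ℝ) :
    (∀ x ∈ ANt N t, rootMap N t x ∈ ANt N (-t)) ∧
    Set.BijOn (rootMap N t) (ANt N t) (ANt N (-t)) ∧
    ContDiffOn ℝ ((⊤ : ℕ∞) : WithTop ℕ∞) (rootMap N t) (ANt N t) ∧
    ContDiffOn ℝ ((⊤ : ℕ∞) : WithTop ℕ∞) (rootMap N (-t)) (ANt N (-t)) ∧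
    (∀ x ∈ ANt N t, rootMap N (-t) (rootMap N t x) = x) ∧
    (∀ y ∈ ANt N (-t), rootMap N t (rootMap N (-t) y) = y) := by
  have hmaps : Set.MapsTo (rootMap N t) (ANt N t) (ANt N (-t)) := fun _ => rootMap_mem
  have hmaps_neg : Set.MapsTo (rootMap N (-t)) (ANt N (-t)) (ANt N t) := fun _ hy => by
    simpa using rootMap_mem hy
  have hinv : Set.InvOn (rootMap N (-t)) (rootMap N t) (ANt N t) (ANt N (-t)) :=
    ⟨fun _ => rootMap_neg_rootMap, fun _ => rootMap_rootMap_neg⟩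
  exact ⟨hmaps, hinv.bijOn hmaps hmaps_neg, fun _ => contDiffWithinAt_rootMap,
    fun _ => contDiffWithinAt_rootMap, hinv.1, hinv.2⟩

/-- **Diffeomorphism between root sets**: `y^t` maps `A_N(t)` into `A_N(−t)`, is a
bijection `A_N(t) → A_N(−t)`, is `C^∞` on `A_N(t)` with `C^∞` inverse `y^{−t}`. -/
theorem rootMap_diffeo (N : ℕ) (hN : 1 ≤ N) (t : ℝ) :
    (∀ x ∈ ANt N t, rootMap N t x ∈ ANt N (-t)) ∧
    Set.BijOn (rootMap N t) (ANt N t) (ANt N (-t)) ∧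
    ContDiffOn ℝ ((⊤ : ℕ∞) : WithTop ℕ∞) (rootMap N t) (ANt N t) ∧
    ContDiffOn ℝ ((⊤ : ℕ∞) : WithTop ℕ∞) (rootMap N (-t)) (ANt N (-t)) ∧
    (∀ x ∈ ANt N t, rootMap N (-t) (rootMap N t x) = x) ∧
    (∀ y ∈ ANt N (-t), rootMap N t (rootMap N (-t) y) = y) :=
  rootMap_diffeo_general N t
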